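/- Fix $T>0$, $H\in(0,1/2)$, $\mu\in\mathbb{R}$, and define $\sigma_u^+(s,t)=\frac{(t-s)^H}{u-\mu(t-s)+\frac{1}{2}(t^{2H}-s^{2H})}$. Then for all sufficiently large $u$, the maximizer $(s_u,t_u)$ of $\sigma_u^+$ over $\{0\le s\le t\le T\}$ is unique, satisfies $t_u=T$ and $s_u>0$, and $s_u\sim T^{1/(1-2H)}u^{-1/(1-2H)}$ as $u\to\infty$, i.e. $s_u u^{1/(1-2H)}\to T^{1/(1-2H)}$. -/

import Mathlib

open Filter

/-- The standard deviation-type function `σ_u^+` from the drawup analysis. -/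
noncomputable def sigmaPlus (H μ u s t : ℝ) : ℝ :=
  (t - s) ^ H / (u - μ * (t - s) + (t ^ (2*H) - s ^ (2*H)) / 2)

open Set

namespace SigmaAux

noncomputable def Gg (T H μ u p : ℝ) : ℝ :=
  H * p ^ (2*H - 1) * (T - p) - H * (u - μ * (T - p) + (T ^ (2*H) - p ^ (2*H)) / 2) - μ * (T - p)


lemma Dbounds {T H μ : ℝ} (hT : 0 < T) (hH1 : 0 < H) {u p t : ℝ}
    (hp : 0 ≤ p) (hpt : p ≤ t) (htT : t ≤ T) :
    u - (|μ| * T + T^(2*H)/2) ≤ u - μ * (t - p) + (t ^ (2*H) - p ^ (2*H)) / 2 ∧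
    u - μ * (t - p) + (t ^ (2*H) - p ^ (2*H)) / 2 ≤ u + (|μ| * T + T^(2*H)/2) := by
  have h1 : p ^ (2*H) ≤ t ^ (2*H) := Real.rpow_le_rpow hp hpt (by positivity)
  have h2 : t ^ (2*H) ≤ T ^ (2*H) := Real.rpow_le_rpow (hp.trans hpt) htT (by positivity)
  have h3 : 0 ≤ p ^ (2*H) := Real.rpow_nonneg hp _
  have h4 : |μ * (t-p)| ≤ |μ| * T := by
    rw [abs_mul, abs_of_nonneg (by linarith : (0:ℝ) ≤ t - p)]
    exact mul_le_mul_of_nonneg_left (by linarith) (abs_nonneg μ)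
  have h5 := abs_le.mp h4
  constructor <;> cases' h5 with h5a h5b <;> linarith

noncomputable def dlt (T H μ : ℝ) : ℝ :=
  min (T/2) ((max (μ*(1-H)/(H*(1-2*H)*T/2) + 1) 1) ^ (1/(2*H-2)))

lemma dlt_pos {T H μ : ℝ} (hT : 0 < T) : 0 < dlt T H μ :=
  lt_min (by linarith) (Real.rpow_pos_of_pos (lt_of_lt_of_le one_pos (le_max_right _ _)) _)

lemma dlt_le (T H μ : ℝ) : dlt T H μ ≤ T/2 := min_le_left _ _

lemma dlt_pow {T H μ p : ℝ} (hH2 : H < 1/2)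
    (hp : 0 < p) (hpd : p ≤ dlt T H μ) :
    μ*(1-H)/(H*(1-2*H)*T/2) + 1 ≤ p ^ (2*H-2) := by
  set B := max (μ*(1-H)/(H*(1-2*H)*T/2) + 1) 1 with hB
  have hB1 : (1:ℝ) ≤ B := le_max_right _ _
  have hB0 : (0:ℝ) < B := lt_of_lt_of_le one_pos hB1
  have hple : p ≤ B ^ (1/(2*H-2)) := hpd.trans (min_le_right _ _)
  have key : (B ^ (1/(2*H-2))) ^ (2*H-2) ≤ p ^ (2*H-2) :=
    Real.rpow_le_rpow_of_nonpos hp hple (by linarith)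
  have hne : (2*H-2) ≠ 0 := by intro h; linarith [h]
  have heq : (B ^ (1/(2*H-2))) ^ (2*H-2) = B := by
    rw [← Real.rpow_mul hB0.le, one_div, inv_mul_cancel₀ hne, Real.rpow_one]
  calc μ*(1-H)/(H*(1-2*H)*T/2) + 1 ≤ B := le_max_left _ _
    _ = (B ^ (1/(2*H-2))) ^ (2*H-2) := heq.symm
    _ ≤ p ^ (2*H-2) := key

lemma Gg_hasDeriv {T H μ u p : ℝ} (hp : 0 < p) :
    HasDerivAt (fun q => Gg T H μ u q)
      (H*(2*H-1)*p^(2*H-2)*(T-p) + H*(H-1)*p^(2*H-1) + μ*(1-H)) p := by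
  have h1 : HasDerivAt (fun q : ℝ => q ^ (2*H-1)) ((2*H-1) * p^(2*H-2)) p := by
    have := Real.hasDerivAt_rpow_const (p := 2*H-1) (x := p) (Or.inl hp.ne')
    convert this using 2; ring
  have h2 : HasDerivAt (fun q : ℝ => q ^ (2*H)) ((2*H) * p^(2*H-1)) p :=
    Real.hasDerivAt_rpow_const (Or.inl hp.ne')
  have t1 : HasDerivAt (fun q : ℝ => H * q ^ (2*H-1) * (T - q))
      ((H * ((2*H-1) * p^(2*H-2))) * (T - p) + (H * p^(2*H-1)) * (0 - 1)) p :=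
    (h1.const_mul H).mul ((hasDerivAt_const p T).sub (hasDerivAt_id p))
  have t2 : HasDerivAt (fun q : ℝ => H * (u - μ * (T - q) + (T ^ (2*H) - q ^ (2*H)) / 2))
      (H * (0 - μ * (0 - 1) + (0 - (2*H) * p^(2*H-1)) / 2)) p := by
    exact (((hasDerivAt_const p u).sub
      (((hasDerivAt_const p T).sub (hasDerivAt_id p)).const_mul μ)).add
      (((hasDerivAt_const p (T ^ (2*H))).sub h2).div_const 2)).const_mul H
  have t3 : HasDerivAt (fun q : ℝ => μ * (T - q)) (μ * (0 - 1)) p :=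
    ((hasDerivAt_const p T).sub (hasDerivAt_id p)).const_mul μ
  have := (t1.sub t2).sub t3
  convert this using 1
  · rfl
  · rfl
  · rfl
  ring

lemma Gg_continuousAt {T H μ u p : ℝ} (hp : 0 < p) :
    ContinuousAt (fun q => Gg T H μ u q) p := by
  have c1 : ContinuousAt (fun q : ℝ => q ^ (2*H-1)) p :=
    Real.continuousAt_rpow_const _ _ (Or.inl hp.ne')
  have c2 : ContinuousAt (fun q : ℝ => q ^ (2*H)) p :=
    Real.continuousAt_rpow_const _ _ (Or.inl hp.ne')
  exact (((continuousAt_const.mul c1).mul (continuousAt_const.sub continuousAt_id)).sub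
    (continuousAt_const.mul ((continuousAt_const.sub
      (continuousAt_const.mul (continuousAt_const.sub continuousAt_id))).add
      ((continuousAt_const.sub c2).div_const 2)))).sub
    (continuousAt_const.mul (continuousAt_const.sub continuousAt_id))

lemma Gg_strictAnti {T H μ u : ℝ} (hT : 0 < T) (hH1 : 0 < H) (hH2 : H < 1/2) :
    StrictAntiOn (fun p => Gg T H μ u p) (Ioc 0 (dlt T H μ)) := by
  apply strictAntiOn_of_deriv_neg (convex_Ioc _ _)
  · exact fun p hp => (Gg_continuousAt hp.1).continuousWithinAt
  · intro p hp
    rw [interior_Ioc] at hp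
    obtain ⟨hp0, hpd⟩ := hp
    rw [(Gg_hasDeriv hp0).deriv]
    have key := dlt_pow (T := T) (μ := μ) hH2 hp0 hpd.le
    have hA : (0:ℝ) < H*(1-2*H)*T/2 :=
      div_pos (mul_pos (mul_pos hH1 (by linarith : (0:ℝ) < 1-2*H)) hT) two_pos
    have h1 : (0:ℝ) < p ^ (2*H-2) := Real.rpow_pos_of_pos hp0 _
    have h2 : (0:ℝ) < p ^ (2*H-1) := Real.rpow_pos_of_pos hp0 _
    have hTp : T/2 ≤ T - p := by
      have := hpd.le.trans (dlt_le T H μ); linarith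
    have hmain : μ*(1-H) < H*(1-2*H)*T/2 * p^(2*H-2) := by
      have h : μ*(1-H)/(H*(1-2*H)*T/2) < p^(2*H-2) := by linarith
      have := (div_lt_iff₀ hA).mp h
      linarith
    nlinarith [mul_le_mul_of_nonneg_left hTp (mul_pos (mul_pos hH1 (by linarith : (0:ℝ) < 1-2*H)) h1).le,
      mul_pos (mul_pos hH1 (show (0:ℝ) < 1-H by linarith)) h2]

lemma mu_bound {μ x y : ℝ} (h0 : 0 ≤ x) (hxy : x ≤ y) :
    -(|μ| * y) ≤ μ * x ∧ μ * x ≤ |μ| * y := by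
  have : |μ * x| ≤ |μ| * y := by
    rw [abs_mul, abs_of_nonneg h0]
    exact mul_le_mul_of_nonneg_left hxy (abs_nonneg μ)
  exact abs_le.mp this

lemma Gg_neg_far {T H μ u : ℝ} (hT : 0 < T) (hH1 : 0 < H) (hH2 : H < 1/2)
    (hu : H * (dlt T H μ)^(2*H-1) * T + H * (|μ| * T + T^(2*H)/2) + |μ| * T < H * u)
    {p : ℝ} (hdp : dlt T H μ ≤ p) (hpT : p ≤ T) : Gg T H μ u p < 0 := by
  have hδ : 0 < dlt T H μ := dlt_pos hT
  have hp0 : 0 < p := lt_of_lt_of_le hδ hdp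
  have pbound : p ^ (2*H-1) ≤ (dlt T H μ) ^ (2*H-1) :=
    Real.rpow_le_rpow_of_nonpos hδ hdp (by linarith)
  have hd1 : (0:ℝ) < (dlt T H μ) ^ (2*H-1) := Real.rpow_pos_of_pos hδ _
  have hp1 : (0:ℝ) < p ^ (2*H-1) := Real.rpow_pos_of_pos hp0 _
  have Dlow := (Dbounds (μ := μ) (u := u) hT hH1 hp0.le hpT le_rfl).1
  have habs := mu_bound (μ := μ) (by linarith : (0:ℝ) ≤ T - p) (by linarith : T - p ≤ T)
  have key : p ^ (2*H-1) * (T - p) ≤ (dlt T H μ) ^ (2*H-1) * T :=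
    mul_le_mul pbound (by linarith) (by linarith) hd1.le
  have key2 := mul_le_mul_of_nonneg_left key hH1.le
  unfold Gg
  cases' habs with ha hb
  nlinarith [key2, Dlow, hu]

lemma Gg_pos_near {T H μ u : ℝ} (hT : 0 < T) (hH1 : 0 < H) (hH2 : H < 1/2) :
    ∃ p : ℝ, 0 < p ∧ p ≤ dlt T H μ ∧ 0 < Gg T H μ u p := by
  set K := max ((2*(H*(u + (|μ| * T + T^(2*H)/2)) + |μ| * T))/(H*T) + 1) 1 with hK
  have hK1 : (1:ℝ) ≤ K := le_max_right _ _
  have hK0 : (0:ℝ) < K := lt_of_lt_of_le one_pos hK1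
  set p := min (dlt T H μ) (K ^ (1/(2*H-1))) with hpdef
  have hδ : 0 < dlt T H μ := dlt_pos hT
  have hp0 : 0 < p := lt_min hδ (Real.rpow_pos_of_pos hK0 _)
  have hpd : p ≤ dlt T H μ := min_le_left _ _
  refine ⟨p, hp0, hpd, ?_⟩
  have hple : p ≤ K ^ (1/(2*H-1)) := min_le_right _ _
  have hne : (2*H-1) ≠ 0 := by intro h; linarith [h]
  have key : K ≤ p ^ (2*H-1) := by
    have h1 : (K ^ (1/(2*H-1))) ^ (2*H-1) ≤ p ^ (2*H-1) :=
      Real.rpow_le_rpow_of_nonpos hp0 hple (by linarith)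
    have h2 : (K ^ (1/(2*H-1))) ^ (2*H-1) = K := by
      rw [← Real.rpow_mul hK0.le, one_div, inv_mul_cancel₀ hne, Real.rpow_one]
    linarith
  have hTp : T/2 ≤ T - p := by
    have := hpd.trans (dlt_le T H μ); linarith
  have Dhigh := (Dbounds (μ := μ) (u := u) hT hH1 hp0.le (by linarith : p ≤ T) le_rfl).2
  have habs := mu_bound (μ := μ) (by linarith : (0:ℝ) ≤ T - p) (by linarith : T - p ≤ T)
  have hp1 : (0:ℝ) < p ^ (2*H-1) := Real.rpow_pos_of_pos hp0 _
  have hKdef : (2*(H*(u + (|μ| * T + T^(2*H)/2)) + |μ| * T))/(H*T) + 1 ≤ K := le_max_left _ _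
  have hHT : (0:ℝ) < H*T := mul_pos hH1 hT
  have hmain : 2*(H*(u + (|μ| * T + T^(2*H)/2)) + |μ| * T) < (H*T) * p^(2*H-1) := by
    have h : (2*(H*(u + (|μ| * T + T^(2*H)/2)) + |μ| * T))/(H*T) < p^(2*H-1) := by linarith
    have := (div_lt_iff₀ hHT).mp h
    linarith
  have key3 : H * p^(2*H-1) * (T/2) ≤ H * p^(2*H-1) * (T - p) :=
    mul_le_mul_of_nonneg_left hTp (by positivity)
  unfold Gg
  cases' habs with ha hb
  nlinarith [key3, Dhigh, hmain]

lemma exists_root {T H μ u : ℝ} (hT : 0 < T) (hH1 : 0 < H) (hH2 : H < 1/2)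
    (hu : H * (dlt T H μ)^(2*H-1) * T + H * (|μ| * T + T^(2*H)/2) + |μ| * T < H * u) :
    ∃ p : ℝ, 0 < p ∧ p < dlt T H μ ∧ Gg T H μ u p = 0 := by
  obtain ⟨q, hq0, hqd, hqpos⟩ := Gg_pos_near (μ := μ) (u := u) hT hH1 hH2
  have hδ : 0 < dlt T H μ := dlt_pos hT
  have hGd : Gg T H μ u (dlt T H μ) < 0 :=
    Gg_neg_far hT hH1 hH2 hu le_rfl ((dlt_le T H μ).trans (by linarith))
  have hcont : ContinuousOn (fun p => Gg T H μ u p) (Icc q (dlt T H μ)) :=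
    fun p hp => (Gg_continuousAt (lt_of_lt_of_le hq0 hp.1)).continuousWithinAt
  have hsub := intermediate_value_Icc' hqd hcont
  obtain ⟨r, hr, hr0⟩ := hsub ⟨hGd.le, hqpos.le⟩
  refine ⟨r, lt_of_lt_of_le hq0 hr.1, ?_, hr0⟩
  rcases eq_or_lt_of_le hr.2 with h | h
  · exfalso; rw [h] at hr0; simp only [] at hr0; rw [hr0] at hGd; exact lt_irrefl _ hGd
  · exact h

lemma sigma_t_strictMono {T H μ u : ℝ} (hT : 0 < T) (hH1 : 0 < H) (hH2 : H < 1/2)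
    (hu : |μ| * T + H * T^(2*H) < H * (u - (|μ| * T + T^(2*H)/2)))
    {p : ℝ} (hp0 : 0 ≤ p) (hpT : p ≤ T) :
    StrictMonoOn (fun t => sigmaPlus H μ u p t) (Icc p T) := by
  have hTH : (0:ℝ) < T^(2*H) := Real.rpow_pos_of_pos hT _
  have hmuT : (0:ℝ) ≤ |μ| * T := mul_nonneg (abs_nonneg μ) hT.le
  have hC0 : 0 < u - (|μ| * T + T^(2*H)/2) := by nlinarith
  apply strictMonoOn_of_deriv_pos (convex_Icc p T)
  · apply ContinuousOn.div
    · exact ((continuous_id.sub continuous_const).rpow_const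
        (fun x => Or.inr hH1.le)).continuousOn
    · exact ((continuous_const.sub (continuous_const.mul
        (continuous_id.sub continuous_const))).add
        (((Real.continuous_rpow_const (by positivity)).sub continuous_const).div_const
          2)).continuousOn
    · intro t ht
      have := (Dbounds (μ := μ) (u := u) hT hH1 hp0 ht.1 ht.2).1
      have : 0 < u - μ * (t - p) + (t ^ (2*H) - p ^ (2*H)) / 2 := by linarith
      exact ne_of_gt this
  · intro t ht
    rw [interior_Icc] at ht
    obtain ⟨htp, htT⟩ := ht
    have ht0 : 0 < t := lt_of_le_of_lt hp0 htp
    have htp' : 0 < t - p := by linarith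
    have hDlow := (Dbounds (μ := μ) (u := u) hT hH1 hp0 (by linarith) htT.le).1
    have hDpos : 0 < u - μ * (t - p) + (t ^ (2*H) - p ^ (2*H)) / 2 := by linarith
    have hnum : HasDerivAt (fun t : ℝ => (t - p) ^ H) (1 * H * (t-p)^(H-1)) t :=
      ((hasDerivAt_id t).sub_const p).rpow_const (Or.inl (ne_of_gt htp'))
    have hden : HasDerivAt
        (fun t : ℝ => u - μ * (t - p) + (t ^ (2*H) - p ^ (2*H)) / 2)
        (0 - μ * 1 + ((2*H) * t^(2*H-1)) / 2) t := by
      exact ((hasDerivAt_const t u).sub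
        (((hasDerivAt_id t).sub_const p).const_mul μ)).add
        (((Real.hasDerivAt_rpow_const (Or.inl ht0.ne')).sub_const (p^(2*H))).div_const 2)
    have hdiv := hnum.div hden (ne_of_gt hDpos)
    have : deriv (fun t => sigmaPlus H μ u p t) t =
        (1 * H * (t-p)^(H-1) * (u - μ * (t - p) + (t ^ (2*H) - p ^ (2*H)) / 2)
          - (t - p)^H * (0 - μ * 1 + ((2*H) * t^(2*H-1)) / 2))
          / (u - μ * (t - p) + (t ^ (2*H) - p ^ (2*H)) / 2)^2 := hdiv.deriv
    rw [this]
    apply div_pos _ (by positivity)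
    have hfact : (t - p) ^ H = (t - p) ^ (H - 1) * (t - p) := by
      rw [← Real.rpow_add_one (ne_of_gt htp') (H - 1)]; ring_nf
    have htfact : t ^ (2*H) = t ^ (2*H-1) * t := by
      rw [← Real.rpow_add_one (ne_of_gt ht0) (2*H-1)]; ring_nf
    have ha : (0:ℝ) < (t - p) ^ (H - 1) := Real.rpow_pos_of_pos htp' _
    have hb : (0:ℝ) < t ^ (2*H-1) := Real.rpow_pos_of_pos ht0 _
    have f1 : (t - p) * t^(2*H-1) ≤ T^(2*H) := by
      have e1 : (t - p) * t^(2*H-1) ≤ t * t^(2*H-1) :=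
        mul_le_mul_of_nonneg_right (by linarith) hb.le
      have e3 : t^(2*H) ≤ T^(2*H) := Real.rpow_le_rpow ht0.le htT.le (by positivity)
      nlinarith [htfact]
    have f2 := mu_bound (μ := μ) (by linarith : (0:ℝ) ≤ t - p) (by linarith : t - p ≤ T)
    have hinner : 0 < H * (u - μ * (t - p) + (t ^ (2*H) - p ^ (2*H)) / 2)
        - (t - p) * (0 - μ * 1 + ((2*H) * t^(2*H-1)) / 2) := by
      have f3 : H * (u - (|μ| * T + T^(2*H)/2))
          ≤ H * (u - μ * (t - p) + (t ^ (2*H) - p ^ (2*H)) / 2) :=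
        mul_le_mul_of_nonneg_left hDlow hH1.le
      have f4 : H * ((t - p) * t^(2*H-1)) ≤ H * T^(2*H) :=
        mul_le_mul_of_nonneg_left f1 hH1.le
      cases' f2 with f2a f2b
      nlinarith [f3, f4, hu]
    calc (0:ℝ) < (t - p) ^ (H - 1) *
        (H * (u - μ * (t - p) + (t ^ (2*H) - p ^ (2*H)) / 2)
          - (t - p) * (0 - μ * 1 + ((2*H) * t^(2*H-1)) / 2)) := mul_pos ha hinner
      _ = 1 * H * (t-p)^(H-1) * (u - μ * (t - p) + (t ^ (2*H) - p ^ (2*H)) / 2)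
          - (t - p)^H * (0 - μ * 1 + ((2*H) * t^(2*H-1)) / 2) := by
        rw [hfact]; ring

lemma sigma_p_deriv {T H μ u p : ℝ} (hH1 : 0 < H) (hp0 : 0 < p) (hpT : p < T)
    (hD : 0 < u - μ * (T - p) + (T ^ (2*H) - p ^ (2*H)) / 2) :
    ∃ V : ℝ, HasDerivAt (fun q => sigmaPlus H μ u q T) V p ∧
      (0 < Gg T H μ u p → 0 < V) ∧ (Gg T H μ u p < 0 → V < 0) := by
  have hTp : 0 < T - p := by linarith
  have hnum : HasDerivAt (fun q : ℝ => (T - q) ^ H) ((0-1) * H * (T-p)^(H-1)) p :=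
    ((hasDerivAt_const p T).sub (hasDerivAt_id p)).rpow_const (Or.inl (ne_of_gt hTp))
  have hden : HasDerivAt
      (fun q : ℝ => u - μ * (T - q) + (T ^ (2*H) - q ^ (2*H)) / 2)
      (0 - μ * (0-1) + (0 - (2*H) * p^(2*H-1)) / 2) p :=
    ((hasDerivAt_const p u).sub
      (((hasDerivAt_const p T).sub (hasDerivAt_id p)).const_mul μ)).add
      (((hasDerivAt_const p (T^(2*H))).sub
        (Real.hasDerivAt_rpow_const (Or.inl hp0.ne'))).div_const 2)
  have hdiv := hnum.div hden (ne_of_gt hD)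
  set D := u - μ * (T - p) + (T ^ (2*H) - p ^ (2*H)) / 2 with hDdef
  have hfact : (T - p) ^ H = (T - p) ^ (H - 1) * (T - p) := by
    rw [← Real.rpow_add_one (ne_of_gt hTp) (H - 1)]; ring_nf
  have ha : (0:ℝ) < (T - p) ^ (H - 1) := Real.rpow_pos_of_pos hTp _
  have hval : ((0-1) * H * (T-p)^(H-1) * D
      - (T - p)^H * (0 - μ * (0-1) + (0 - (2*H) * p^(2*H-1)) / 2)) / D^2
      = (T - p) ^ (H - 1) * Gg T H μ u p / D^2 := by
    rw [hfact]; unfold Gg; rw [← hDdef]; ring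
  refine ⟨_, hdiv, ?_, ?_⟩
  · intro hG
    rw [hval]
    exact div_pos (mul_pos ha hG) (by positivity)
  · intro hG
    rw [hval]
    apply div_neg_of_neg_of_pos _ (by positivity)
    exact mul_neg_of_pos_of_neg ha hG

lemma g_contOn {T H μ u : ℝ} (hT : 0 < T) (hH1 : 0 < H)
    (hUC : 0 < u - (|μ| * T + T^(2*H)/2)) :
    ContinuousOn (fun p => sigmaPlus H μ u p T) (Icc 0 T) := by
  apply ContinuousOn.div
  · exact ((continuous_const.sub continuous_id).rpow_const fun x => Or.inr hH1.le).continuousOn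
  · exact ((continuous_const.sub
      (continuous_const.mul (continuous_const.sub continuous_id))).add
      ((continuous_const.sub (Real.continuous_rpow_const (by positivity))).div_const
        2)).continuousOn
  · intro q hq
    have := (Dbounds (μ := μ) (u := u) hT hH1 hq.1 hq.2 le_rfl).1
    exact ne_of_gt (by linarith)

end SigmaAux

set_option maxHeartbeats 4000000 in
open SigmaAux in
theorem sigmaPlus_unique_interior_maximizer_small_H (T H μ : ℝ) (hT : 0 < T)
    (hH1 : 0 < H) (hH2 : H < 1/2) :
    ∃ u0 : ℝ, ∃ s : ℝ → ℝ,
      (∀ u : ℝ, u0 ≤ u →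
        (∀ p t : ℝ, 0 ≤ p → p ≤ t → t ≤ T →
            0 < u - μ * (t - p) + (t ^ (2*H) - p ^ (2*H)) / 2) ∧
        (0 < s u ∧ s u < T) ∧
        (∀ p t : ℝ, 0 ≤ p → p ≤ t → t ≤ T →
            sigmaPlus H μ u p t ≤ sigmaPlus H μ u (s u) T ∧
            (sigmaPlus H μ u p t = sigmaPlus H μ u (s u) T → p = s u ∧ t = T))) ∧
      Tendsto (fun u => s u * u ^ (1/(1 - 2*H))) atTop (nhds (T ^ (1/(1 - 2*H)))) := by
  have h12 : (0:ℝ) < 1 - 2*H := by linarith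
  have hδ0 : 0 < dlt T H μ := dlt_pos hT
  have hδT : dlt T H μ ≤ T/2 := dlt_le T H μ
  have hTH : (0:ℝ) < T^(2*H) := Real.rpow_pos_of_pos hT _
  have hmuT : (0:ℝ) ≤ |μ| * T := mul_nonneg (abs_nonneg μ) hT.le
  set u0 := max (((|μ| * T + T^(2*H)/2) + (|μ| * T + H*T^(2*H))/H) + 1)
    (((H*(dlt T H μ)^(2*H-1)*T + H*(|μ| * T + T^(2*H)/2) + |μ| * T)/H) + 1) with hu0def
  have hcond : ∀ u : ℝ, u0 ≤ u →
      (|μ| * T + H * T^(2*H) < H * (u - (|μ| * T + T^(2*H)/2))) ∧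
      (H * (dlt T H μ)^(2*H-1) * T + H * (|μ| * T + T^(2*H)/2) + |μ| * T < H * u) := by
    intro u hu
    have h1 : ((|μ| * T + T^(2*H)/2) + (|μ| * T + H*T^(2*H))/H) + 1 ≤ u :=
      le_trans (le_max_left _ _) hu
    have h2 : ((H*(dlt T H μ)^(2*H-1)*T + H*(|μ| * T + T^(2*H)/2) + |μ| * T)/H) + 1 ≤ u :=
      le_trans (le_max_right _ _) hu
    constructor
    · have h3 : (|μ| * T + H*T^(2*H))/H < u - (|μ| * T + T^(2*H)/2) := by linarith
      have := (div_lt_iff₀ hH1).mp h3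
      nlinarith
    · have h3 : (H*(dlt T H μ)^(2*H-1)*T + H*(|μ| * T + T^(2*H)/2) + |μ| * T)/H < u := by linarith
      have := (div_lt_iff₀ hH1).mp h3
      nlinarith
  have key : ∀ u : ℝ, u0 ≤ u → ∃ p, 0 < p ∧ p < dlt T H μ ∧ Gg T H μ u p = 0 :=
    fun u hu => exists_root hT hH1 hH2 (hcond u hu).2
  refine ⟨u0, fun u => if h : u0 ≤ u then (key u h).choose else 1, ?_, ?_⟩
  · intro u hu
    have hsval : (fun u => if h : u0 ≤ u then (key u h).choose else 1) u
        = (key u hu).choose := dif_pos hu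
    obtain ⟨hs0, hsδ, hGs⟩ := (key u hu).choose_spec
    set sv := (key u hu).choose with hsv
    clear_value sv
    rw [hsval]
    have huT := (hcond u hu).1
    have huG := (hcond u hu).2
    have hUC : 0 < u - (|μ| * T + T^(2*H)/2) := by nlinarith [mul_pos hH1 hTH]
    have hsT : sv < T := by linarith
    have hDposT : ∀ q : ℝ, 0 ≤ q → q ≤ T →
        0 < u - μ * (T - q) + (T ^ (2*H) - q ^ (2*H)) / 2 := by
      intro q h1 h2
      linarith [(Dbounds (μ := μ) (u := u) hT hH1 h1 h2 le_rfl).1]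
    have hGpos : ∀ q : ℝ, 0 < q → q < sv → 0 < Gg T H μ u q := by
      intro q h1 h2
      have := Gg_strictAnti (u := u) hT hH1 hH2 ⟨h1, (h2.trans hsδ).le⟩ ⟨hs0, hsδ.le⟩ h2
      simpa [hGs] using this
    have hGneg : ∀ q : ℝ, sv < q → q ≤ T → Gg T H μ u q < 0 := by
      intro q h1 h2
      rcases le_or_gt q (dlt T H μ) with h3 | h3
      · have := Gg_strictAnti (u := u) hT hH1 hH2 ⟨hs0, hsδ.le⟩ ⟨hs0.trans h1, h3⟩ h1
        simpa [hGs] using this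
      · exact Gg_neg_far hT hH1 hH2 huG h3.le h2
    have mono1 : StrictMonoOn (fun q => sigmaPlus H μ u q T) (Icc 0 sv) := by
      apply strictMonoOn_of_deriv_pos (convex_Icc 0 sv)
      · exact (g_contOn hT hH1 hUC).mono (Icc_subset_Icc le_rfl hsT.le)
      · intro q hq
        rw [interior_Icc] at hq
        obtain ⟨V, hV, hVpos, _⟩ := sigma_p_deriv hH1 hq.1 (hq.2.trans hsT)
          (hDposT q hq.1.le (hq.2.trans hsT).le)
        rw [hV.deriv]
        exact hVpos (hGpos q hq.1 hq.2)
    have anti1 : StrictAntiOn (fun q => sigmaPlus H μ u q T) (Icc sv T) := by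
      apply strictAntiOn_of_deriv_neg (convex_Icc sv T)
      · exact (g_contOn hT hH1 hUC).mono (Icc_subset_Icc hs0.le le_rfl)
      · intro q hq
        rw [interior_Icc] at hq
        obtain ⟨V, hV, _, hVneg⟩ := sigma_p_deriv hH1 (hs0.trans hq.1) hq.2
          (hDposT q (hs0.trans hq.1).le hq.2.le)
        rw [hV.deriv]
        exact hVneg (hGneg q hq.1 hq.2.le)
    have gmax : ∀ q : ℝ, 0 ≤ q → q ≤ T → q ≠ sv →
        sigmaPlus H μ u q T < sigmaPlus H μ u sv T := by
      intro q h1 h2 h3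
      rcases lt_or_gt_of_ne h3 with h4 | h4
      · exact mono1 ⟨h1, h4.le⟩ ⟨hs0.le, le_rfl⟩ h4
      · exact anti1 ⟨le_rfl, hsT.le⟩ ⟨h4.le, h2⟩ h4
    refine ⟨fun p t hp hpt htT => by
        linarith [(Dbounds (μ := μ) (u := u) hT hH1 hp hpt htT).1], ⟨hs0, hsT⟩, ?_⟩
    intro p t hp hpt htT
    rcases eq_or_lt_of_le htT with rfl | htT'
    · by_cases hps : p = sv
      · exact ⟨le_of_eq (by rw [hps]), fun _ => ⟨hps, rfl⟩⟩
      · have := gmax p hp hpt hps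
        exact ⟨this.le, fun he => absurd he (ne_of_lt this)⟩
    · have hm := sigma_t_strictMono (u := u) hT hH1 hH2 huT hp (hpt.trans htT'.le)
      have h1 : sigmaPlus H μ u p t < sigmaPlus H μ u p T :=
        hm ⟨hpt, htT'.le⟩ ⟨hpt.trans htT'.le, le_rfl⟩ htT'
      have h2 : sigmaPlus H μ u p T ≤ sigmaPlus H μ u sv T := by
        by_cases hps : p = sv
        · exact le_of_eq (by rw [hps])
        · exact (gmax p hp (hpt.trans htT'.le) hps).le
      exact ⟨(h1.trans_le h2).le, fun he => absurd he (ne_of_lt (h1.trans_le h2))⟩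
  · -- asymptotics
    set sfun := fun u => if h : u0 ≤ u then (key u h).choose else 1 with hsfun
    clear_value sfun
    set C1 := |μ| * T + T^(2*H)/2 + |μ| * T / H with hC1def
    clear_value C1
    have hC1n : 0 ≤ C1 := by
      have h1 : 0 ≤ |μ| * T / H := div_nonneg hmuT hH1.le
      rw [hC1def]; nlinarith [hTH]
    have hne21 : (2*H-1) ≠ 0 := by intro h; linarith [h]
    have hexp : 1/(2*H-1) = -(1/(1-2*H)) := by
      rw [show 2*H-1 = -(1-2*H) by ring, div_neg]
    have hβ : (0:ℝ) < 1/(1-2*H) := by positivity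
    have fact : ∀ u : ℝ, ∀ hu : u0 ≤ u, 0 < sfun u ∧ sfun u < dlt T H μ ∧
        |sfun u ^ (2*H-1) * (T - sfun u) - u| ≤ C1 := by
      intro u hu
      have hval : sfun u = (key u hu).choose := by rw [hsfun]; exact dif_pos hu
      obtain ⟨hs0, hsδ, hGs⟩ := (key u hu).choose_spec
      rw [hval]
      set sv := (key u hu).choose with hsvdef
      clear_value sv
      have hsT2 : sv ≤ T/2 := (hsδ.trans_le hδT).le
      refine ⟨hs0, hsδ, ?_⟩
      have e : H*(sv^(2*H-1)*(T-sv) - u) =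
          H*(-(μ*(T-sv)) + (T^(2*H)-sv^(2*H))/2) + μ*(T-sv) := by
        unfold Gg at hGs; linear_combination hGs
      have m1 := mu_bound (μ := μ) (by linarith : (0:ℝ) ≤ T - sv)
        (by linarith : T - sv ≤ T)
      have m2 : 0 ≤ sv^(2*H) := Real.rpow_nonneg hs0.le _
      have m3 : sv^(2*H) ≤ T^(2*H) := Real.rpow_le_rpow hs0.le (by linarith) (by positivity)
      have b1 : H*(μ*(T-sv)) ≤ H*(|μ| * T) := mul_le_mul_of_nonneg_left m1.2 hH1.le
      have b2 : H*(-(|μ| * T)) ≤ H*(μ*(T-sv)) := mul_le_mul_of_nonneg_left m1.1 hH1.le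
      have b3 : H*((T^(2*H)-sv^(2*H))/2) ≤ H*(T^(2*H)/2) :=
        mul_le_mul_of_nonneg_left (by linarith) hH1.le
      have b4 : 0 ≤ H*((T^(2*H)-sv^(2*H))/2) := mul_nonneg hH1.le (by linarith)
      have hC1' : H * C1 = H*(|μ| * T) + H*(T^(2*H)/2) + |μ| * T := by
        rw [hC1def]; field_simp
      rw [abs_le]
      constructor
      · have h' : H * (-C1) ≤ H * (sv^(2*H-1)*(T-sv) - u) := by
          linarith [e, b1, b4, m1.1, hC1', mul_pos hH1 hTH]
        exact (mul_le_mul_iff_right₀ hH1).mp h'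
      · have h' : H * (sv^(2*H-1)*(T-sv) - u) ≤ H * C1 := by
          linarith [e, b2, b3, m1.2, hC1', mul_pos hH1 hTH]
        exact (mul_le_mul_iff_right₀ hH1).mp h'
    -- s u → 0
    have htend0 : Tendsto (fun u : ℝ => ((u - C1)/T)^(1/(2*H-1))) atTop (nhds 0) := by
      have h1 : Tendsto (fun u : ℝ => (u - C1)/T) atTop atTop :=
        ((tendsto_atTop_add_const_right atTop (-C1) tendsto_id).congr
          (fun x => by simp only [id_eq]; ring)).atTop_div_const hT
      have h2 := (tendsto_rpow_neg_atTop (y := 1/(1-2*H)) hβ).comp h1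
      have : (fun u : ℝ => ((u - C1)/T)^(1/(2*H-1)))
          = (fun x : ℝ => x ^ (-(1/(1-2*H)))) ∘ (fun u : ℝ => (u - C1)/T) := by
        funext x; simp [Function.comp, hexp]
      rw [this]; exact h2
    have hslim : Tendsto (fun u => sfun u) atTop (nhds 0) := by
      apply tendsto_of_tendsto_of_tendsto_of_le_of_le' tendsto_const_nhds htend0
      · filter_upwards [eventually_ge_atTop u0] with u hu
        exact (fact u hu).1.le
      · filter_upwards [eventually_ge_atTop u0, eventually_ge_atTop (C1 + 1)] with u hu hu1
        obtain ⟨hs0, hsδ, habs⟩ := fact u hu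
        have hsT2 : sfun u ≤ T/2 := (hsδ.trans_le hδT).le
        have hw1 : u - C1 ≤ sfun u ^ (2*H-1) * (T - sfun u) := by
          have := (abs_le.mp habs).1; linarith
        have hp1 : (0:ℝ) < sfun u ^ (2*H-1) := Real.rpow_pos_of_pos hs0 _
        have hw2 : sfun u ^ (2*H-1) * (T - sfun u) ≤ sfun u ^ (2*H-1) * T :=
          mul_le_mul_of_nonneg_left (by linarith) hp1.le
        have ha : (0:ℝ) < (u - C1)/T := div_pos (by linarith) hT
        have hle : (u - C1)/T ≤ sfun u ^ (2*H-1) := by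
          rw [div_le_iff₀ hT]; nlinarith
        have h1 : (sfun u ^ (2*H-1)) ^ (1/(2*H-1)) ≤ ((u - C1)/T) ^ (1/(2*H-1)) := by
          apply Real.rpow_le_rpow_of_nonpos ha hle
          rw [hexp]; linarith
        have h2 : (sfun u ^ (2*H-1)) ^ (1/(2*H-1)) = sfun u := by
          rw [← Real.rpow_mul hs0.le, mul_one_div, div_self hne21, Real.rpow_one]
        linarith
    -- ratio tends to 1
    have hCdiv : Tendsto (fun u : ℝ => C1 / u) atTop (nhds 0) :=
      tendsto_const_nhds.div_atTop tendsto_id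
    have hratio : Tendsto (fun u => (sfun u ^ (2*H-1) * (T - sfun u)) / u) atTop (nhds 1) := by
      apply tendsto_of_tendsto_of_tendsto_of_le_of_le'
        (g := fun u : ℝ => 1 - C1/u) (h := fun u : ℝ => 1 + C1/u)
      · simpa using tendsto_const_nhds.sub hCdiv
      · simpa using tendsto_const_nhds.add hCdiv
      · filter_upwards [eventually_ge_atTop u0, eventually_ge_atTop 1] with u hu hu1
        obtain ⟨hs0, hsδ, habs⟩ := fact u hu
        have hupos : (0:ℝ) < u := by linarith
        have h1 := (abs_le.mp habs).1
        have hle : (1 - C1/u) * u ≤ sfun u ^ (2*H-1) * (T - sfun u) := by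
          have : (1 - C1/u) * u = u - C1 := by field_simp
          rw [this]; linarith
        rw [le_div_iff₀ hupos]; linarith
      · filter_upwards [eventually_ge_atTop u0, eventually_ge_atTop 1] with u hu hu1
        obtain ⟨hs0, hsδ, habs⟩ := fact u hu
        have hupos : (0:ℝ) < u := by linarith
        have h1 := (abs_le.mp habs).2
        rw [div_le_iff₀ hupos]
        have : (1 + C1/u) * u = u + C1 := by field_simp
        rw [this]; linarith
    have hTs : Tendsto (fun u => T - sfun u) atTop (nhds T) := by
      simpa using tendsto_const_nhds.sub hslim
    have hmain : Tendsto (fun u => (T - sfun u) /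
        ((sfun u ^ (2*H-1) * (T - sfun u)) / u)) atTop (nhds T) := by
      have := hTs.div hratio one_ne_zero
      rw [div_one] at this
      exact this
    have hfin := hmain.rpow_const (p := 1/(1-2*H)) (Or.inr hβ.le)
    apply hfin.congr'
    filter_upwards [eventually_ge_atTop u0, eventually_ge_atTop 1] with u hu hu1
    obtain ⟨hs0, hsδ, _⟩ := fact u hu
    have hupos : (0:ℝ) < u := by linarith
    have hsT2 : sfun u < T := by linarith [hsδ.trans_le hδT]
    have hTsp : (0:ℝ) < T - sfun u := by linarith
    have hp1 : (0:ℝ) < sfun u ^ (2*H-1) := Real.rpow_pos_of_pos hs0 _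
    have hid1 : (T - sfun u) / ((sfun u ^ (2*H-1) * (T - sfun u)) / u)
        = u / sfun u ^ (2*H-1) := by
      field_simp
    rw [hid1, Real.div_rpow hupos.le hp1.le]
    have hid2 : (sfun u ^ (2*H-1)) ^ (1/(1-2*H)) = (sfun u)⁻¹ := by
      rw [← Real.rpow_mul hs0.le]
      have : (2*H-1) * (1/(1-2*H)) = -1 := by
        rw [mul_one_div]
        rw [div_eq_iff (by linarith : (1-2*H) ≠ 0)]
        ring
      rw [this, Real.rpow_neg_one]
    rw [hid2, div_inv_eq_mul, mul_comm]
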